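/- arXiv:2106.14781 — 4 statements merged into one kernel-verified Lean document; each statement's English description precedes it below -/
import Mathlib

section
/- Set O := (1+P)⁻¹ (the endomorphism 1+P is invertible since P is positive definite). Then the orthogonal projection of E × E, equipped with the product inner product ⟨(x,y),(x',y')⟩ = g₀(x,x') + g₁(y,y'), onto the orthogonal complement of the diagonal subspace { (X,X) : X ∈ E } is given by the block formula (X, Y) ↦ ( P O (X − Y), O (Y − X) ). -/
open scoped RealInnerProductSpace

/-- Let `E` be a finite-dimensional real inner product space with inner
product `g₀ = ⟪·,·⟫`, `P` a `g₀`-self-adjoint positive-definite endomorphism,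
`g₁(x,y) := ⟪P x, y⟫`, and `O := (1 + P)⁻¹` (a two-sided inverse of `1 + P`). Then the map
`(X,Y) ↦ (P O (X − Y), O (Y − X))` is the orthogonal projection of `E × E` (with the product
inner product `⟨(x,y),(x',y')⟩ = g₀(x,x') + g₁(y,y')`) onto the orthogonal complement of the
diagonal `{(X,X)}`: its value lies in that orthogonal complement and the difference from the
input lies in the diagonal. -/
theorem orthogonal_projection_onto_normal_space
    {E : Type*} [NormedAddCommGroup E] [InnerProductSpace ℝ E] [FiniteDimensional ℝ E]
    (P O : E →ₗ[ℝ] E)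
    (hsa : ∀ x y : E, ⟪P x, y⟫ = ⟪x, P y⟫)
    (hpd : ∀ x : E, x ≠ 0 → 0 < ⟪P x, x⟫)
    (hO1 : (1 + P) * O = 1) (hO2 : O * (1 + P) = 1) :
    ∀ u : E × E,
      (∀ X : E, ⟪P (O (u.1 - u.2)), X⟫ + ⟪P (O (u.2 - u.1)), X⟫ = 0) ∧
      (∃ X : E, u - (P (O (u.1 - u.2)), O (u.2 - u.1)) = (X, X)) := by
  intro u
  constructor
  · intro X
    have h : u.2 - u.1 = -(u.1 - u.2) := by abel
    rw [h, map_neg, map_neg, inner_neg_left]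
    ring
  · refine ⟨u.2 + O (u.1 - u.2), ?_⟩
    have h : (1 + P) (O (u.1 - u.2)) = u.1 - u.2 := by
      have := congrArg (fun f : E →ₗ[ℝ] E => f (u.1 - u.2)) hO1
      simpa using this
    have h2 : O (u.1 - u.2) + P (O (u.1 - u.2)) = u.1 - u.2 := by
      simpa [LinearMap.add_apply] using h
    have h3 : u.2 - u.1 = -(u.1 - u.2) := by abel
    have h4 : O (u.2 - u.1) = -O (u.1 - u.2) := by rw [h3, map_neg]
    refine Prod.ext ?_ ?_
    · show u.1 - P (O (u.1 - u.2)) = u.2 + O (u.1 - u.2)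
      obtain ⟨w, hw⟩ : ∃ w, O (u.1 - u.2) = w := ⟨_, rfl⟩
      rw [hw] at h2 ⊢
      have h5 : u.1 = u.2 + (w + P w) := by rw [h2]; abel
      rw [h5]; abel
    · show u.2 - O (u.2 - u.1) = u.2 + O (u.1 - u.2)
      rw [h4]; abel
end

section
/- Set O := (1+P)⁻¹ (the endomorphism 1+P is invertible since P is positive definite). Then the linear map Π : E × E → E × E defined by Π(X,Y) = ( P O (X − Y), O (Y − X) ) is idempotent (Π ∘ Π = Π) and self-adjoint with respect to the product inner product ⟨(x,y),(x',y')⟩ = g₀(x,x') + g₁(y,y') on E × E. -/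
open scoped RealInnerProductSpace

/-- Let `E` be a finite-dimensional real inner product space with inner
product `g₀ = ⟪·,·⟫`, `P` a `g₀`-self-adjoint positive-definite endomorphism,
`g₁(x,y) := ⟪P x, y⟫`, and `O := (1 + P)⁻¹` (a two-sided inverse of `1 + P`). Then the map
`Π(X,Y) = (P O (X − Y), O (Y − X))` is idempotent (`Π ∘ Π = Π`) and self-adjoint with
respect to the product inner product `⟨(x,y),(x',y')⟩ = g₀(x,x') + g₁(y,y')` on `E × E`. -/
theorem projection_idempotent_selfadjoint
    {E : Type*} [NormedAddCommGroup E] [InnerProductSpace ℝ E] [FiniteDimensional ℝ E]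
    (P O : E →ₗ[ℝ] E)
    (hsa : ∀ x y : E, ⟪P x, y⟫ = ⟪x, P y⟫)
    (hpd : ∀ x : E, x ≠ 0 → 0 < ⟪P x, x⟫)
    (hO1 : (1 + P) * O = 1) (hO2 : O * (1 + P) = 1)
    (Pi : E × E → E × E)
    (hPi : ∀ u : E × E, Pi u = (P (O (u.1 - u.2)), O (u.2 - u.1))) :
    (∀ u : E × E, Pi (Pi u) = Pi u) ∧
    (∀ u v : E × E,
      ⟪(Pi u).1, v.1⟫ + ⟪P (Pi u).2, v.2⟫ = ⟪u.1, (Pi v).1⟫ + ⟪P u.2, (Pi v).2⟫) := by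
  -- pointwise version of the inverse equation
  have h1 : ∀ x : E, O x + P (O x) = x := by
    intro x
    have := congrArg (fun f : E →ₗ[ℝ] E => f x) hO1
    simpa [Module.End.mul_apply, LinearMap.add_apply] using this
  -- O commutes with P
  have hPO : P * O = O * P := by
    have hswap : (1 + P) * P = P * (1 + P) := by
      rw [add_mul, mul_add, one_mul, mul_one]
    calc P * O = (O * (1 + P)) * (P * O) := by rw [hO2, one_mul]
      _ = O * ((1 + P) * P) * O := by simp only [mul_assoc]
      _ = O * (P * (1 + P)) * O := by rw [hswap]
      _ = O * P * ((1 + P) * O) := by simp only [mul_assoc]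
      _ = O * P := by rw [hO1, mul_one]
  have hcomm : ∀ x : E, P (O x) = O (P x) := by
    intro x
    have := congrArg (fun f : E →ₗ[ℝ] E => f x) hPO
    simpa [Module.End.mul_apply] using this
  -- O is self-adjoint
  have hOsa : ∀ x y : E, ⟪O x, y⟫ = ⟪x, O y⟫ := by
    intro x y
    calc ⟪O x, y⟫ = ⟪O x, O y + P (O y)⟫ := by rw [h1]
      _ = ⟪O x, O y⟫ + ⟪P (O x), O y⟫ := by rw [inner_add_right, ← hsa]
      _ = ⟪O x + P (O x), O y⟫ := by rw [inner_add_left]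
      _ = ⟪x, O y⟫ := by rw [h1]
  -- P ∘ O is self-adjoint
  have hPOsa : ∀ x y : E, ⟪P (O x), y⟫ = ⟪x, P (O y)⟫ := by
    intro x y
    rw [hsa, hOsa, hcomm]
  -- key identity for idempotency
  have key : ∀ u : E × E, (Pi u).1 - (Pi u).2 = u.1 - u.2 := by
    intro u
    rw [hPi]
    simp only
    have h : O (u.2 - u.1) = - O (u.1 - u.2) := by rw [← map_neg, neg_sub]
    rw [h, sub_neg_eq_add, add_comm, h1]
  constructor
  · intro u
    have key2 : (Pi u).2 - (Pi u).1 = u.2 - u.1 := by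
      rw [← neg_sub, key u, neg_sub]
    rw [hPi (Pi u), key u, key2, ← hPi u]
  · intro u v
    rw [hPi u, hPi v]
    simp only [map_sub, inner_sub_left, inner_sub_right]
    simp only [hPOsa]
    simp only [hsa]
    ring
end

section
/- Let E be a real inner product space, let X, Y ∈ E be orthonormal vectors, and let v ∈ E. Define the symmetric bilinear map D(A,B) := ⟨v,A⟩·B + ⟨v,B⟩·A − ⟨A,B⟩·v. Then ⟨D(X,X), D(Y,Y)⟩ − ‖D(X,Y)‖² = −2‖v_⊤‖² + ‖v_⊥‖², where v_⊤ := ⟨v,X⟩X + ⟨v,Y⟩Y is the orthogonal projection of v onto the plane spanned by X and Y and v_⊥ := v − v_⊤. (This is the identity for the difference tensor of a conformal change of metric evaluated on a plane.) -/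
open scoped RealInnerProductSpace

/-- Let `E` be a real inner product space, `X, Y ∈ E` orthonormal, `v ∈ E`,
and `D(A,B) := ⟪v,A⟫•B + ⟪v,B⟫•A − ⟪A,B⟫•v` the difference tensor of a conformal change.
With `v_⊤ := ⟪v,X⟫•X + ⟪v,Y⟫•Y` the projection of `v` onto the plane spanned by `X, Y` and
`v_⊥ := v − v_⊤`, one has `⟪D(X,X), D(Y,Y)⟫ − ‖D(X,Y)‖² = −2‖v_⊤‖² + ‖v_⊥‖²`. -/
theorem conformal_difference_tensor_plane_identity
    {E : Type*} [NormedAddCommGroup E] [InnerProductSpace ℝ E]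
    (X Y v : E) (hX : ‖X‖ = 1) (hY : ‖Y‖ = 1) (hXY : ⟪X, Y⟫ = 0)
    (D : E → E → E)
    (hD : ∀ A B : E, D A B = ⟪v, A⟫ • B + ⟪v, B⟫ • A - ⟪A, B⟫ • v)
    (vT : E) (hvT : vT = ⟪v, X⟫ • X + ⟪v, Y⟫ • Y) :
    ⟪D X X, D Y Y⟫ - ‖D X Y‖ ^ 2 = -2 * ‖vT‖ ^ 2 + ‖v - vT‖ ^ 2 := by
  have hx : ⟪X, X⟫ = (1:ℝ) := by
    rw [real_inner_self_eq_norm_sq, hX]; norm_num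
  have hy : ⟪Y, Y⟫ = (1:ℝ) := by
    rw [real_inner_self_eq_norm_sq, hY]; norm_num
  have hYX : ⟪Y, X⟫ = (0:ℝ) := by rw [real_inner_comm]; exact hXY
  rw [hD, hD, hD, hvT, ← real_inner_self_eq_norm_sq, ← real_inner_self_eq_norm_sq, ← real_inner_self_eq_norm_sq]
  simp only [inner_add_left, inner_add_right, inner_sub_left, inner_sub_right,
    inner_smul_left, inner_smul_right, hx, hy, hXY, hYX, real_inner_comm v X,
    real_inner_comm v Y, RCLike.ofReal_real_eq_id, id_eq, conj_trivial, mul_zero, mul_one, zero_mul, one_mul]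
  ring
end

section
/- Let E be a finite-dimensional real normed space and P : E → E a continuous linear endomorphism. For t in a sufficiently small neighborhood of 0 the operator 1 − t(1 − P) is invertible; define F(t) := t(1−t) · (1 − t(1−P))⁻¹ on this neighborhood (extended arbitrarily, e.g. by Ring.inverse, elsewhere). Then F(0) = 0, the first derivative of F at 0 equals the identity endomorphism, and for every integer r ≥ 2 the r-th derivative of F at 0 equals −r! · P (1−P)^{r−2}. (These are the Taylor coefficients producing the r-th order variation terms of the curvature of the convex sum (1−t)g₀ + t g₁.) -/
open scoped Topology

set_option maxHeartbeats 1000000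
set_option synthInstance.maxHeartbeats 400000

/-- Auxiliary coefficient sequence: `0, 1, Q - 1, Q² - Q, …`. -/
noncomputable def convexSumCoeff {A : Type*} [Ring A] (Q : A) : ℕ → A
  | 0 => 0
  | 1 => 1
  | (n + 2) => Q ^ (n + 1) - Q ^ n

/-- Let `E` be a finite-dimensional real normed space, `P : E → E` a
continuous linear endomorphism, and set `F(t) := t(1−t) • (1 − t • (1−P))⁻¹` (the inverse
taken via `Ring.inverse`, which extends by `0` off units; near `t = 0` the operator
`1 − t • (1−P)` is invertible). Then `F(0) = 0`, the first derivative of `F` at `0` is the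
identity, and for every `r ≥ 2` the `r`-th derivative of `F` at `0` equals
`−r! • (P * (1−P)^(r−2))`. -/
theorem convex_sum_taylor_coefficients
    {E : Type*} [NormedAddCommGroup E] [NormedSpace ℝ E] [FiniteDimensional ℝ E]
    (P : E →L[ℝ] E) (F : ℝ → E →L[ℝ] E)
    (hF : ∀ t : ℝ, F t = (t * (1 - t)) • Ring.inverse ((1 : E →L[ℝ] E) - t • ((1 : E →L[ℝ] E) - P))) :
    (∀ᶠ t in 𝓝 (0 : ℝ), IsUnit ((1 : E →L[ℝ] E) - t • ((1 : E →L[ℝ] E) - P))) ∧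
    F 0 = 0 ∧
    iteratedDeriv 1 F 0 = 1 ∧
    (∀ r : ℕ, 2 ≤ r →
      iteratedDeriv r F 0 = -(r.factorial : ℝ) • (P * ((1 : E →L[ℝ] E) - P) ^ (r - 2))) := by
  set Q : E →L[ℝ] E := 1 - P with hQ
  set a : ℕ → (E →L[ℝ] E) := convexSumCoeff Q with ha
  -- Small-norm neighbourhood
  have hsmall : ∀ᶠ t in 𝓝 (0 : ℝ), ‖t • Q‖ < 1 := by
    have hcont : Continuous fun t : ℝ => ‖t • Q‖ :=
      (continuous_id.smul continuous_const).norm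
    have h0 : Filter.Tendsto (fun t : ℝ => ‖t • Q‖) (𝓝 0) (𝓝 0) := by
      simpa using hcont.tendsto 0
    exact h0.eventually (eventually_lt_nhds one_pos)
  have hunit : ∀ᶠ t in 𝓝 (0 : ℝ), IsUnit ((1 : E →L[ℝ] E) - t • Q) :=
    hsmall.mono fun t ht => isUnit_one_sub_of_norm_lt_one ht
  -- The power series
  set p : FormalMultilinearSeries ℝ ℝ (E →L[ℝ] E) :=
    fun n => ContinuousMultilinearMap.mkPiRing ℝ (Fin n) (a n) with hp
  have hcoeff : ∀ n, p.coeff n = a n := by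
    intro n
    simp [hp, FormalMultilinearSeries.coeff, ContinuousMultilinearMap.mkPiRing_apply]
  -- F has power series p at 0
  have hFP : HasFPowerSeriesAt F p 0 := by
    rw [hasFPowerSeriesAt_iff]
    filter_upwards [hsmall] with z hz
    simp only [hcoeff, zero_add]
    set inv : E →L[ℝ] E := Ring.inverse ((1 : E →L[ℝ] E) - z • Q) with hinv
    have hgeom : HasSum (fun n => (z • Q) ^ n) inv := hasSum_geom_series_inverse _ hz
    have hgeom' : HasSum (fun n => z ^ n • Q ^ n) inv := by
      simpa [smul_pow] using hgeom
    -- first series: coefficients shifted by one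
    have hc : HasSum (fun n => z ^ (n + 1) • Q ^ n) (z • inv) := by
      have := hgeom'.const_smul z
      simpa [smul_smul, pow_succ, mul_comm] using this
    have hb : HasSum (fun n => z ^ (n + 2) • Q ^ n) ((z ^ 2) • inv) := by
      have := hgeom'.const_smul (z ^ 2)
      simpa [smul_smul, pow_add, mul_comm] using this
    -- pad them
    set C : ℕ → (E →L[ℝ] E) := fun n => Nat.rec 0 (fun m _ => z ^ (m + 1) • Q ^ m) n with hC
    set B : ℕ → (E →L[ℝ] E) := fun n =>
      Nat.rec 0 (fun m _ => Nat.rec 0 (fun k _ => z ^ (k + 2) • Q ^ k) m) n with hB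
    have hc' : HasSum C (z • inv) := by
      have h1 : HasSum (fun n => C (n + 1)) (z • inv) := hc
      have h2 := (hasSum_nat_add_iff 1).mp h1
      simpa [hC] using h2
    have hb' : HasSum B ((z ^ 2) • inv) := by
      have h1 : HasSum (fun n => B (n + 2)) ((z ^ 2) • inv) := hb
      have h2 := (hasSum_nat_add_iff 2).mp h1
      simpa [hB, Finset.sum_range_succ] using h2
    have hdiff : HasSum (fun n => C n - B n) (z • inv - (z ^ 2) • inv) := hc'.sub hb'
    have hterm : ∀ n, z ^ n • a n = C n - B n := by
      intro n
      match n with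
      | 0 => simp [ha, hC, hB, convexSumCoeff]
      | 1 => simp [ha, hC, hB, convexSumCoeff]
      | (n + 2) =>
        simp only [ha, hC, hB, convexSumCoeff, smul_sub]
    have hsum : HasSum (fun n => z ^ n • a n) (z • inv - (z ^ 2) • inv) := by
      refine hdiff.congr_fun fun n => hterm n
    have hFz : F z = z • inv - (z ^ 2) • inv := by
      rw [hF z, ← hinv, mul_one_sub, sub_smul, sq]
    rw [hFz]
    exact hsum
  obtain ⟨r, hr⟩ := hFP
  -- derivative identities
  have hderiv : ∀ n : ℕ, iteratedDeriv n F 0 = n.factorial • a n := by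
    intro n
    have := hr.factorial_smul (1 : ℝ) n
    rw [iteratedDeriv_eq_iteratedFDeriv, ← this]
    have h2 : (p n fun _ => (1 : ℝ)) = a n := hcoeff n
    rw [h2]
  refine ⟨hunit, ?_, ?_, ?_⟩
  · simp [hF 0]
  · rw [hderiv 1]
    simp [ha, convexSumCoeff]
  · intro r hr2
    obtain ⟨k, rfl⟩ : ∃ k, r = k + 2 := ⟨r - 2, by omega⟩
    rw [hderiv (k + 2)]
    have hcomm : P * Q ^ k = Q ^ k * P := by
      have : Commute P Q := (Commute.one_right P).sub_right (Commute.refl P)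
      exact (this.pow_right k).eq
    have hak : a (k + 2) = -(P * Q ^ k) := by
      have : Q ^ (k + 1) - Q ^ k = Q ^ k * (Q - 1) := by
        rw [mul_sub, mul_one, ← pow_succ]
      rw [ha]
      show Q ^ (k + 1) - Q ^ k = -(P * Q ^ k)
      rw [this, hcomm]
      have : Q - 1 = -P := by rw [hQ]; abel
      rw [this]
      simp [mul_neg]
    rw [hak]
    show (Nat.factorial (k + 2) : ℕ) • -(P * Q ^ k) = _
    have hidx : (k + 2) - 2 = k := by omega
    rw [hidx, ← Nat.cast_smul_eq_nsmul ℝ]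
    rw [smul_neg, neg_smul]
end
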